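/- Let τ ∈ (0,1), let x ∈ ℝ^n not be Pareto stationary, and set d := d_ω(x). Then there exists λ̄ > 0 such that for every λ ∈ (0, λ̄] and every i = 1,…,m one has F_i(x + λd) ≤ F_i(x) + λ τ θ_x(d). -/

import Mathlib

open Filter Topology
open scoped RealInnerProductSpace

noncomputable section

/-- `Euc n` is Euclidean `n`-space `ℝ^n`. -/
abbrev Euc (n : ℕ) := EuclideanSpace ℝ (Fin n)

/-- `HasDirDeriv f x d D` : the one-sided directional derivative of `f` at `x`
in direction `d` exists and equals `D`, i.e. `(f (x + α • d) - f x)/α → D` as `α → 0⁺`. -/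
def HasDirDeriv {n : ℕ} (f : Euc n → ℝ) (x d : Euc n) (D : ℝ) : Prop :=
  Filter.Tendsto (fun α : ℝ => (f (x + α • d) - f x) / α)
    (nhdsWithin 0 (Set.Ioi 0)) (nhds D)

/-- `x` is Pareto stationary for the objectives `F i`:
for every direction `d`, `max_i F_i'(x; d) ≥ 0`, i.e. some objective has
nonnegative directional derivative in direction `d`. -/
def ParetoStationary {n m : ℕ} (F : Fin m → Euc n → ℝ) (x : Euc n) : Prop :=
  ∀ d : Euc n, ∃ i : Fin m, ∃ D : ℝ, HasDirDeriv (F i) x d D ∧ 0 ≤ D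

/-- `θ_x(d) = max_i { ⟪∇g_i(x), d⟫ + ½⟪d, B_i(x) d⟫ + h_i(x+d) - h_i(x) }`. -/
def theta {n m : ℕ} (g h : Fin m → Euc n → ℝ)
    (B : Fin m → Euc n → (Euc n →L[ℝ] Euc n)) (x d : Euc n) : ℝ :=
  ⨆ i : Fin m, (⟪gradient (g i) x, d⟫ + (1 / 2) * ⟪d, B i x d⟫ + h i (x + d) - h i x)

/-- `φ_{ω,x}(d) = θ_x(d) + (ω/2)‖d‖²`. -/
def phi {n m : ℕ} (g h : Fin m → Euc n → ℝ)
    (B : Fin m → Euc n → (Euc n →L[ℝ] Euc n)) (ω : ℝ) (x d : Euc n) : ℝ :=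
  theta g h B x d + (ω / 2) * ‖d‖ ^ 2

/-!
If `θ_x(d) ≥ 0` at the minimiser `d` of `φ_{ω,x}`, then `φ_{ω,x} ≥ 0` everywhere. Dividing
`φ_{ω,x}(t e) ≥ 0` by `t > 0` and letting `t → 0⁺`, the quadratic terms disappear and the terms of
the maximum tend to the directional derivatives `F_i'(x; e)`, so one of these is nonnegative:
`x` would be Pareto stationary. Hence `θ_x(d) < 0`. Each `F_i = g_i + h_i` then decreases along
`d` at least like its first-order model `⟪∇g_i(x), d⟫ + h_i(x + d) - h_i(x) ≤ θ_x(d) < τ θ_x(d)`,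
using differentiability of `g_i` and the chord inequality for the convex `h_i`.
-/

open Set

section DirectionalDerivative

variable {n : ℕ} {f f₁ f₂ : Euc n → ℝ} {x d : Euc n} {D D₁ D₂ : ℝ}

lemma hasDirDeriv_iff_hasDerivWithinAt :
    HasDirDeriv f x d D ↔ HasDerivWithinAt (fun t : ℝ => f (x + t • d)) D (Ioi 0) 0 := by
  rw [hasDerivWithinAt_iff_tendsto_slope' (s := Ioi 0) (lt_irrefl 0), HasDirDeriv]
  congr! 1
  ext t
  simp [slope_def_field]

lemma HasDirDeriv.add (h₁ : HasDirDeriv f₁ x d D₁) (h₂ : HasDirDeriv f₂ x d D₂) :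
    HasDirDeriv (fun y => f₁ y + f₂ y) x d (D₁ + D₂) :=
  (Tendsto.add h₁ h₂).congr fun t => by ring

lemma DifferentiableAt.hasDirDeriv (hf : DifferentiableAt ℝ f x) (d : Euc n) :
    HasDirDeriv f x d ⟪gradient f x, d⟫ := by
  rw [hasDirDeriv_iff_hasDerivWithinAt]
  have hline : HasDerivAt (fun t : ℝ => x + t • d) d 0 := by
    simpa using ((hasDerivAt_id (0 : ℝ)).smul_const d).const_add x
  have hval : fderiv ℝ f x d = ⟪gradient f x, d⟫ := by
    simp [gradient, InnerProductSpace.toDual_symm_apply]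
  exact hval ▸ (hf.hasFDerivAt.comp_hasDerivAt_of_eq 0 hline (by simp)).hasDerivWithinAt

lemma ConvexOn.comp_add_smul (hf : ConvexOn ℝ univ f) (x d : Euc n) :
    ConvexOn ℝ univ (fun t : ℝ => f (x + t • d)) := by
  have hline : (fun t : ℝ => f (x + t • d)) = f ∘ AffineMap.lineMap x (x + d) := by
    ext t
    simp [AffineMap.lineMap_apply, add_comm]
  simpa [hline] using hf.comp_affineMap (AffineMap.lineMap x (x + d))

lemma ConvexOn.exists_hasDirDeriv (hf : ConvexOn ℝ univ f) (x d : Euc n) :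
    ∃ D, HasDirDeriv f x d D :=
  ⟨_, hasDirDeriv_iff_hasDerivWithinAt.2 <|
    (hf.comp_add_smul x d).hasDerivWithinAt_rightDeriv_of_mem_interior (by simp)⟩

lemma ConvexOn.le_add_smul_sub (hf : ConvexOn ℝ univ f) (x d : Euc n) {t : ℝ}
    (ht₀ : 0 ≤ t) (ht₁ : t ≤ 1) : f (x + t • d) ≤ f x + t * (f (x + d) - f x) := by
  have := hf.2 (mem_univ x) (mem_univ (x + d)) (sub_nonneg.2 ht₁) ht₀ (by ring)
  rw [show (1 - t) • x + t • (x + d) = x + t • d by module, smul_eq_mul, smul_eq_mul] at this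
  linarith

end DirectionalDerivative

section Model

variable {n m : ℕ} (g h : Fin m → Euc n → ℝ) (B : Fin m → Euc n → (Euc n →L[ℝ] Euc n))
  (x : Euc n)

def thetaTerm (i : Fin m) (d : Euc n) : ℝ :=
  ⟪gradient (g i) x, d⟫ + (1 / 2) * ⟪d, B i x d⟫ + h i (x + d) - h i x

lemma thetaTerm_le_theta (i : Fin m) (d : Euc n) :
    thetaTerm g h B x i d ≤ theta g h B x d :=
  le_ciSup (f := fun i => thetaTerm g h B x i d) (finite_range _).bddAbove i

lemma exists_thetaTerm_eq_theta [Nonempty (Fin m)] (d : Euc n) :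
    ∃ i, thetaTerm g h B x i d = theta g h B x d :=
  exists_eq_ciSup_of_finite (f := fun i => thetaTerm g h B x i d)

variable {g h B x}

lemma tendsto_thetaTerm_smul_div {i : Fin m} {e : Euc n} {D : ℝ}
    (hh : HasDirDeriv (h i) x e D) :
    Tendsto (fun t => thetaTerm g h B x i (t • e) / t) (𝓝[>] 0)
      (𝓝 (⟪gradient (g i) x, e⟫ + D)) := by
  have hquad : Tendsto (fun t : ℝ => ⟪gradient (g i) x, e⟫ + t / 2 * ⟪e, B i x e⟫) (𝓝[>] 0)
      (𝓝 ⟪gradient (g i) x, e⟫) := by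
    have hcont : Continuous fun t : ℝ => ⟪gradient (g i) x, e⟫ + t / 2 * ⟪e, B i x e⟫ := by
      fun_prop
    simpa using (hcont.tendsto 0).mono_left nhdsWithin_le_nhds
  refine (hquad.add hh).congr' ?_
  filter_upwards [self_mem_nhdsWithin] with t (ht : 0 < t)
  simp only [thetaTerm, map_smul, real_inner_smul_left, real_inner_smul_right]
  field_simp
  ring

lemma paretoStationary_of_phi_nonneg [Nonempty (Fin m)] (hg : ∀ i, DifferentiableAt ℝ (g i) x)
    (hh : ∀ i, ConvexOn ℝ univ (h i)) {ω : ℝ} (hφ : ∀ e, 0 ≤ phi g h B ω x e) :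
    ParetoStationary (fun i y => g i y + h i y) x := by
  intro e
  choose Dh hDh using fun i => (hh i).exists_hasDirDeriv x e
  by_contra! hneg
  have hF : ∀ i, ⟪gradient (g i) x, e⟫ + Dh i < 0 :=
    fun i => hneg i _ (((hg i).hasDirDeriv e).add (hDh i))
  have hsmall : Tendsto (fun t : ℝ => ω / 2 * t * ‖e‖ ^ 2) (𝓝[>] 0) (𝓝 0) := by
    have hcont : Continuous fun t : ℝ => ω / 2 * t * ‖e‖ ^ 2 := by fun_prop
    simpa using (hcont.tendsto 0).mono_left nhdsWithin_le_nhds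
  have hev : ∀ᶠ t in 𝓝[>] (0 : ℝ), 0 < t ∧
      ∀ i, thetaTerm g h B x i (t • e) / t + ω / 2 * t * ‖e‖ ^ 2 < 0 := by
    refine eventually_mem_nhdsWithin.and (eventually_all.2 fun i => ?_)
    exact ((tendsto_thetaTerm_smul_div (hDh i)).add hsmall).eventually_lt_const
      (by simpa using hF i)
  obtain ⟨t, ht, hlt⟩ := hev.exists
  obtain ⟨i, hi⟩ := exists_thetaTerm_eq_theta g h B x (t • e)
  have hφt := hφ (t • e)
  rw [phi, ← hi, norm_smul, Real.norm_of_nonneg ht.le] at hφt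
  have := mul_neg_of_pos_of_neg ht (hlt i)
  field_simp at this
  linarith

end Model

lemma eventually_sufficient_decrease {n : ℕ} {f h : Euc n → ℝ} {x d : Euc n} {c : ℝ}
    (hf : DifferentiableAt ℝ f x) (hh : ConvexOn ℝ univ h)
    (hc : ⟪gradient f x, d⟫ + (h (x + d) - h x) < c) :
    ∀ᶠ t in 𝓝[>] 0, f (x + t • d) + h (x + t • d) ≤ f x + h x + t * c := by
  have hslope := (hf.hasDirDeriv d).eventually_lt_const
    (show ⟪gradient f x, d⟫ < c - (h (x + d) - h x) by linarith)
  filter_upwards [hslope, Ioc_mem_nhdsGT zero_lt_one] with t hquot ⟨ht₀, ht₁⟩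
  rw [div_lt_iff₀ ht₀] at hquot
  linarith [hh.le_add_smul_sub x d ht₀.le ht₁]

theorem armijo_line_search_finite_general
    {n m : ℕ} (g h : Fin m → Euc n → ℝ)
    (B : Fin m → Euc n → (Euc n →L[ℝ] Euc n))
    (hm : 0 < m)
    (hg : ∀ i, ContDiff ℝ 2 (g i))
    (hh : ∀ i, ConvexOn ℝ Set.univ (h i))
    (hBpos : ∀ i x (d : Euc n), d ≠ 0 → 0 < ⟪d, B i x d⟫)
    (ω : ℝ) (hω : 0 < ω)
    (dω : Euc n → Euc n)
    (hmin : ∀ y d, phi g h B ω y (dω y) ≤ phi g h B ω y d)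
    (τ : ℝ) (hτ : τ ∈ Set.Ioo (0 : ℝ) 1)
    (x : Euc n)
    (hx : ¬ ParetoStationary (fun i y => g i y + h i y) x) :
    ∃ lam0 > (0 : ℝ), ∀ lam ∈ Set.Ioc (0 : ℝ) lam0, ∀ i,
      g i (x + lam • dω x) + h i (x + lam • dω x)
        ≤ g i x + h i x + lam * τ * theta g h B x (dω x) := by
  have : Nonempty (Fin m) := Fin.pos_iff_nonempty.mp hm
  have hgx : ∀ i, DifferentiableAt ℝ (g i) x :=
    fun i => (hg i).differentiable two_ne_zero |>.differentiableAt
  have hθ : theta g h B x (dω x) < 0 := by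
    by_contra! hθ
    refine hx (paretoStationary_of_phi_nonneg hgx hh fun e => le_trans ?_ (hmin x e))
    unfold phi
    positivity
  have hdec : ∀ i, ∀ᶠ lam in 𝓝[>] 0, g i (x + lam • dω x) + h i (x + lam • dω x)
      ≤ g i x + h i x + lam * (τ * theta g h B x (dω x)) := by
    refine fun i => eventually_sufficient_decrease (hgx i) (hh i) ?_
    have hmodel := thetaTerm_le_theta g h B x i (dω x)
    have hcurv : 0 ≤ ⟪dω x, B i x (dω x)⟫ := by
      rcases eq_or_ne (dω x) 0 with hd | hd
      · simp [hd]
      · exact (hBpos i x _ hd).le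
    unfold thetaTerm at hmodel
    linarith [mul_lt_mul_of_neg_right hτ.2 hθ]
  obtain ⟨lam0, hlam0, hsub⟩ := mem_nhdsGT_iff_exists_Ioc_subset.1 (eventually_all.2 hdec)
  exact ⟨lam0, hlam0, fun lam hlam i => by simpa only [mul_assoc] using hsub hlam i⟩

/-- the Armijo line search terminates: there is λ̄ > 0 such that the
Armijo condition holds for all λ ∈ (0, λ̄] and all objectives. -/
theorem armijo_line_search_finite
    {n m : ℕ} (g h : Fin m → Euc n → ℝ)
    (B : Fin m → Euc n → (Euc n →L[ℝ] Euc n))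
    (hm : 0 < m)
    (hg : ∀ i, ContDiff ℝ 2 (g i))
    (hsc : ∀ i, ∃ a : ℝ, 0 < a ∧ ∀ x y : Euc n,
      a * ‖x - y‖ ^ 2 ≤ ⟪gradient (g i) x - gradient (g i) y, x - y⟫)
    (hh : ∀ i, ConvexOn ℝ Set.univ (h i))
    (hBsymm : ∀ i x (u v : Euc n), ⟪B i x u, v⟫ = ⟪u, B i x v⟫)
    (hBpos : ∀ i x (d : Euc n), d ≠ 0 → 0 < ⟪d, B i x d⟫)
    (ω : ℝ) (hω : 0 < ω)
    (dω : Euc n → Euc n)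
    (hmin : ∀ y d, phi g h B ω y (dω y) ≤ phi g h B ω y d)
    (τ : ℝ) (hτ : τ ∈ Set.Ioo (0 : ℝ) 1)
    (x : Euc n)
    (hx : ¬ ParetoStationary (fun i y => g i y + h i y) x) :
    ∃ lam0 > (0 : ℝ), ∀ lam ∈ Set.Ioc (0 : ℝ) lam0, ∀ i,
      g i (x + lam • dω x) + h i (x + lam • dω x)
        ≤ g i x + h i x + lam * τ * theta g h B x (dω x) :=
  armijo_line_search_finite_general g h B hm hg hh hBpos ω hω dω hmin τ hτ x hx
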